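/- arXiv:2306.11903 — 3 statements merged into one kernel-verified Lean document; each statement's English description precedes it below -/
import Mathlib

section
/- Let d_s, m, k, n ∈ ℕ with n ≥ 1, let L : EuclideanSpace ℝ (Fin k) → ℝ be convex and differentiable, let f : EuclideanSpace ℝ (Fin d_s) → EuclideanSpace ℝ (Fin k) be differentiable, and set L_S = L ∘ f. Write points of (Fin n → EuclideanSpace ℝ (Fin d_s)) × EuclideanSpace ℝ (Fin m) as w = (θ₁,…,θₙ, η), define L₁(w) = L((1/n)·∑_{i=1}^n f(θᵢ)) (independent of η), let L₂ be differentiable, let h > 0 and α ∈ ℝ, and define the modified loss L̃(w) = L₁(w) + L₂(w) + (h/4)·‖gradient L₁ w‖² + (h·α²/4)·‖gradient L₂ w‖². Then at every diagonal point w₀ = (θ,…,θ,0): L̃(w₀) ≤ (1/n)·∑_{i=1}^n L_S(θ) + L₂(w₀) + (h/(4n²))·∑_{i=1}^n ‖gradient L_S θ‖² + (h·α²/4)·‖gradient L₂ w₀‖². -/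
noncomputable section

/-- The parameter space of the big model obtained by deep fusing `n` small models
with parameters in `ℝ^{d_s}`, with extra parameters `η ∈ ℝ^m`:
points `w = (θ₁,…,θₙ,η)`. -/
abbrev Wsp (d_s m n : ℕ) := EuclideanSpace ℝ ((Fin n × Fin d_s) ⊕ Fin m)

/-- The `i`-th parameter block `θᵢ` of a point `w = (θ₁,…,θₙ,η)`. -/
def blk {d_s m n : ℕ} (w : Wsp d_s m n) (i : Fin n) : EuclideanSpace ℝ (Fin d_s) :=
  WithLp.toLp 2 (fun a => w (Sum.inl (i, a)) : Fin d_s → ℝ)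

/-- The diagonal point `(θ,…,θ,0)`. -/
def diagPt {d_s m n : ℕ} (θ : EuclideanSpace ℝ (Fin d_s)) : Wsp d_s m n :=
  WithLp.toLp 2 (fun z => Sum.elim (fun p : Fin n × Fin d_s => θ p.2) (fun _ => (0 : ℝ)) z :
    ((Fin n × Fin d_s) ⊕ Fin m) → ℝ)

/-!
At a diagonal point `w₀ = (θ,…,θ,0)` the averaged output `(1/n) ∑ᵢ f(θᵢ)` is `f θ`, so
`L₁(w₀) = L_S(θ)`, and the chain rule gives `∇L₁(w₀) = (1/n)(∇L_S(θ),…,∇L_S(θ),0)`, whose squared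
norm is `‖∇L_S(θ)‖² / n`. Hence the bound holds with equality.
-/

open InnerProductSpace RealInnerProductSpace

section Blocks

variable {d_s m n : ℕ}

def blkCLM (i : Fin n) : Wsp d_s m n →L[ℝ] EuclideanSpace ℝ (Fin d_s) :=
  LinearMap.toContinuousLinearMap
    { toFun := fun w => blk w i
      map_add' := fun _ _ => rfl
      map_smul' := fun _ _ => rfl }

@[simp]
theorem blkCLM_apply (i : Fin n) (w : Wsp d_s m n) : blkCLM i w = blk w i := rfl

@[simp]
theorem blk_diagPt (θ : EuclideanSpace ℝ (Fin d_s)) (i : Fin n) :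
    blk (diagPt θ : Wsp d_s m n) i = θ := rfl

theorem inner_diagPt_left (v : EuclideanSpace ℝ (Fin d_s)) (w : Wsp d_s m n) :
    ⟪(diagPt v : Wsp d_s m n), w⟫ = ∑ i, ⟪v, blk w i⟫ := by
  simp [PiLp.inner_apply, Fintype.sum_sum_type, Fintype.sum_prod_type, diagPt, blk]

theorem norm_diagPt_sq (v : EuclideanSpace ℝ (Fin d_s)) :
    ‖(diagPt v : Wsp d_s m n)‖ ^ 2 = n * ‖v‖ ^ 2 := by
  rw [← real_inner_self_eq_norm_sq, inner_diagPt_left]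
  simp

theorem smul_sum_apply_blk_diagPt {F : Type*} [AddCommGroup F] [Module ℝ F]
    (f : EuclideanSpace ℝ (Fin d_s) → F) (θ : EuclideanSpace ℝ (Fin d_s)) (hn : n ≠ 0) :
    (1 / (n : ℝ)) • ∑ i, f (blk (diagPt θ : Wsp d_s m n) i) = f θ := by
  simp [← Nat.cast_smul_eq_nsmul ℝ, smul_smul, hn]

theorem hasFDerivAt_sum_comp_blk {F : Type*} [NormedAddCommGroup F] [NormedSpace ℝ F]
    {f : EuclideanSpace ℝ (Fin d_s) → F} {w : Wsp d_s m n}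
    {f' : Fin n → EuclideanSpace ℝ (Fin d_s) →L[ℝ] F}
    (hf : ∀ i, HasFDerivAt f (f' i) (blk w i)) :
    HasFDerivAt (fun w => ∑ i, f (blk w i)) (∑ i, (f' i).comp (blkCLM i)) w :=
  HasFDerivAt.fun_sum fun i _ => (hf i).comp w (blkCLM i).hasFDerivAt

theorem hasGradientAt_comp_avg_diagPt {k : ℕ} {L : EuclideanSpace ℝ (Fin k) → ℝ}
    {f : EuclideanSpace ℝ (Fin d_s) → EuclideanSpace ℝ (Fin k)} {θ : EuclideanSpace ℝ (Fin d_s)}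
    (hL : DifferentiableAt ℝ L (f θ)) (hf : DifferentiableAt ℝ f θ) (hn : n ≠ 0) :
    HasGradientAt (fun w : Wsp d_s m n => L ((1 / (n : ℝ)) • ∑ i, f (blk w i)))
      ((1 / (n : ℝ)) • diagPt (gradient (L ∘ f) θ)) (diagPt θ) := by
  set DL := fderiv ℝ L (f θ)
  set Df := fderiv ℝ f θ
  have hLf : ∀ u, ⟪gradient (L ∘ f) θ, u⟫ = DL (Df u) := fun u => by
    rw [← toDual_apply_apply, ← (hL.comp θ hf).hasGradientAt.hasFDerivAt.fderiv,
      fderiv_comp θ hL hf]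
    rfl
  have hAvg : HasFDerivAt (fun w : Wsp d_s m n => (1 / (n : ℝ)) • ∑ i, f (blk w i))
      ((1 / (n : ℝ)) • ∑ i, Df.comp (blkCLM i)) (diagPt θ) :=
    (hasFDerivAt_sum_comp_blk fun _ => hf.hasFDerivAt).fun_const_smul _
  have hDL : HasFDerivAt L DL ((1 / (n : ℝ)) • ∑ i, f (blk (diagPt θ : Wsp d_s m n) i)) := by
    rw [smul_sum_apply_blk_diagPt f θ hn]
    exact hL.hasFDerivAt
  have hDual : toDual ℝ (Wsp d_s m n) ((1 / (n : ℝ)) • diagPt (gradient (L ∘ f) θ))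
      = DL.comp ((1 / (n : ℝ)) • ∑ i, Df.comp (blkCLM i)) := by
    ext w
    simp [inner_diagPt_left, hLf]
  rw [hasGradientAt_iff_hasFDerivAt, hDual]
  exact hDL.comp (diagPt θ) hAvg

end Blocks

theorem stmt_17_general (d_s m k n : ℕ) (hn : 1 ≤ n)
    (L : EuclideanSpace ℝ (Fin k) → ℝ)
    (hLdiff : Differentiable ℝ L)
    (f : EuclideanSpace ℝ (Fin d_s) → EuclideanSpace ℝ (Fin k))
    (hf : Differentiable ℝ f)
    (L_S : EuclideanSpace ℝ (Fin d_s) → ℝ) (hLS : L_S = L ∘ f)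
    (L₁ : Wsp d_s m n → ℝ)
    (hL₁ : L₁ = fun w => L ((1 / (n : ℝ)) • ∑ i : Fin n, f (blk w i)))
    (L₂ : Wsp d_s m n → ℝ)
    (h : ℝ) (α : ℝ)
    (Lt : Wsp d_s m n → ℝ)
    (hLt : Lt = fun w => L₁ w + L₂ w + (h / 4) * ‖gradient L₁ w‖ ^ 2
      + (h * α ^ 2 / 4) * ‖gradient L₂ w‖ ^ 2)
    (θ : EuclideanSpace ℝ (Fin d_s)) :
    Lt (diagPt θ)
      ≤ (1 / (n : ℝ)) * ∑ _i : Fin n, L_S θ + L₂ (diagPt θ)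
        + (h / (4 * (n : ℝ) ^ 2)) * ∑ _i : Fin n, ‖gradient L_S θ‖ ^ 2
        + (h * α ^ 2 / 4) * ‖gradient L₂ (diagPt θ)‖ ^ 2 := by
  subst hLS hL₁ hLt
  have hn0 : n ≠ 0 := Nat.one_le_iff_ne_zero.mp hn
  have hgrad := (hasGradientAt_comp_avg_diagPt (m := m) (hLdiff (f θ)) (hf θ) hn0).gradient
  simp only [hgrad, smul_sum_apply_blk_diagPt f θ hn0, norm_smul, mul_pow, norm_diagPt_sq,
    Function.comp_apply, Finset.sum_const, Finset.card_univ, Fintype.card_fin, nsmul_eq_mul,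
    Real.norm_eq_abs, sq_abs]
  apply le_of_eq
  field_simp

/-- **Modified loss theorem (Theorem 1 of the paper).** With convex differentiable
training loss `L`, small model `f`, `L_S = L ∘ f`,
`L₁(w) = L((1/n)∑ᵢ f(θᵢ))`, and modified loss
`L̃(w) = L₁(w) + L₂(w) + (h/4)‖∇L₁(w)‖² + (hα²/4)‖∇L₂(w)‖²`, at every diagonal
point `w₀ = (θ,…,θ,0)`:
`L̃(w₀) ≤ (1/n)∑ᵢ L_S(θ) + L₂(w₀) + (h/(4n²))∑ᵢ‖∇L_S(θ)‖² + (hα²/4)‖∇L₂(w₀)‖²`. -/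
theorem stmt_17 (d_s m k n : ℕ) (hn : 1 ≤ n)
    (L : EuclideanSpace ℝ (Fin k) → ℝ)
    (hLconv : ConvexOn ℝ Set.univ L) (hLdiff : Differentiable ℝ L)
    (f : EuclideanSpace ℝ (Fin d_s) → EuclideanSpace ℝ (Fin k))
    (hf : Differentiable ℝ f)
    (L_S : EuclideanSpace ℝ (Fin d_s) → ℝ) (hLS : L_S = L ∘ f)
    (L₁ : Wsp d_s m n → ℝ)
    (hL₁ : L₁ = fun w => L ((1 / (n : ℝ)) • ∑ i : Fin n, f (blk w i)))
    (L₂ : Wsp d_s m n → ℝ) (hL₂ : Differentiable ℝ L₂)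
    (h : ℝ) (hh : 0 < h) (α : ℝ)
    (Lt : Wsp d_s m n → ℝ)
    (hLt : Lt = fun w => L₁ w + L₂ w + (h / 4) * ‖gradient L₁ w‖ ^ 2
      + (h * α ^ 2 / 4) * ‖gradient L₂ w‖ ^ 2)
    (θ : EuclideanSpace ℝ (Fin d_s)) :
    Lt (diagPt θ)
      ≤ (1 / (n : ℝ)) * ∑ _i : Fin n, L_S θ + L₂ (diagPt θ)
        + (h / (4 * (n : ℝ) ^ 2)) * ∑ _i : Fin n, ‖gradient L_S θ‖ ^ 2
        + (h * α ^ 2 / 4) * ‖gradient L₂ (diagPt θ)‖ ^ 2 :=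
  stmt_17_general d_s m k n hn L hLdiff f hf L_S hLS L₁ hL₁ L₂ h α Lt hLt θ
end
end

section
/- Let d_s, m, k, n ∈ ℕ with n ≥ 1, let L : EuclideanSpace ℝ (Fin k) → ℝ and f : EuclideanSpace ℝ (Fin d_s) → EuclideanSpace ℝ (Fin k) be differentiable, and set L_S = L ∘ f. Define L₁ : (Fin n → EuclideanSpace ℝ (Fin d_s)) × EuclideanSpace ℝ (Fin m) → ℝ by L₁(θ₁,…,θₙ,η) = L((1/n)·∑_{i=1}^n f(θᵢ)). Then at every diagonal point w₀ = (θ,…,θ,η): the partial gradient of L₁ with respect to each block θᵢ equals (1/n)·gradient L_S θ, the partial gradient of L₁ with respect to η is zero, and consequently ‖gradient L₁ w₀‖² = (1/n)·‖gradient L_S θ‖². -/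
noncomputable section

/-- Replace the `i`-th block of `w` by `θ'`, keeping all other components. -/
def updBlk {d_s m n : ℕ} (w : Wsp d_s m n) (i : Fin n)
    (θ' : EuclideanSpace ℝ (Fin d_s)) : Wsp d_s m n :=
  WithLp.toLp 2 (fun z => Sum.elim (fun p : Fin n × Fin d_s => if p.1 = i then θ' p.2 else w (Sum.inl p))
    (fun b => w (Sum.inr b)) z : ((Fin n × Fin d_s) ⊕ Fin m) → ℝ)

/-- Replace the `η`-component of `w` by `η'`, keeping the blocks. -/
def updEta {d_s m n : ℕ} (w : Wsp d_s m n) (η' : EuclideanSpace ℝ (Fin m)) :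
    Wsp d_s m n :=
  WithLp.toLp 2 (fun z => Sum.elim (fun p : Fin n × Fin d_s => w (Sum.inl p)) (fun b => η' b) z :
    ((Fin n × Fin d_s) ⊕ Fin m) → ℝ)

/-- The diagonal point `(θ,…,θ,η)`. -/
def diagPtEta {d_s m n : ℕ} (θ : EuclideanSpace ℝ (Fin d_s))
    (η : EuclideanSpace ℝ (Fin m)) : Wsp d_s m n :=
  WithLp.toLp 2 (fun z => Sum.elim (fun p : Fin n × Fin d_s => θ p.2) (fun b => η b) z :
    ((Fin n × Fin d_s) ⊕ Fin m) → ℝ)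

/- At a diagonal point, moving the block `θᵢ` alone moves the average `(1/n) ∑ⱼ f(θⱼ)` by `1/n`
times the move of `f(θᵢ)`, so every block gradient of `L₁` is `(1/n) ∇L_S(θ)`, while `L₁` does not
depend on `η` at all. The coordinates of `∇L₁` are those of its partial gradients, so `‖∇L₁‖²` is
the sum of `n` copies of `‖(1/n) ∇L_S(θ)‖²`, which is `(1/n) ‖∇L_S(θ)‖²`. -/

section Coordinates

variable {ι κ : Type*} [Fintype ι] [Fintype κ] [DecidableEq ι] [DecidableEq κ]

theorem gradient_apply_eq_fderiv_single (g : EuclideanSpace ℝ ι → ℝ) (x : EuclideanSpace ℝ ι)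
    (z : ι) : gradient g x z = fderiv ℝ g x (EuclideanSpace.single z 1) := by
  rw [← inner_gradient_left, EuclideanSpace.inner_single_right]
  simp

theorem gradient_comp_apply_of_map_single {g : EuclideanSpace ℝ ι → ℝ}
    {u : EuclideanSpace ℝ κ → EuclideanSpace ℝ ι}
    {T : EuclideanSpace ℝ κ →L[ℝ] EuclideanSpace ℝ ι}
    {x : EuclideanSpace ℝ κ} (hg : DifferentiableAt ℝ g (u x)) (hu : HasFDerivAt u T x)
    {a : κ} {z : ι} (hT : T (EuclideanSpace.single a 1) = EuclideanSpace.single z 1) :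
    gradient (fun y => g (u y)) x a = gradient g (u x) z := by
  have hgu : HasFDerivAt (fun y => g (u y)) (fderiv ℝ g (u x) ∘L T) x :=
    hg.hasFDerivAt.comp x hu
  rw [gradient_apply_eq_fderiv_single, gradient_apply_eq_fderiv_single, hgu.fderiv,
    ContinuousLinearMap.comp_apply, hT]

end Coordinates

section BlockCoordinates

variable {d_s m n : ℕ}

@[simp]
theorem updBlk_apply_inl (w : Wsp d_s m n) (i : Fin n) (θ' : EuclideanSpace ℝ (Fin d_s))
    (j : Fin n) (a : Fin d_s) :
    updBlk w i θ' (Sum.inl (j, a)) = if j = i then θ' a else w (Sum.inl (j, a)) := rfl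

@[simp]
theorem updBlk_apply_inr (w : Wsp d_s m n) (i : Fin n) (θ' : EuclideanSpace ℝ (Fin d_s))
    (b : Fin m) : updBlk w i θ' (Sum.inr b) = w (Sum.inr b) := rfl

@[simp]
theorem updEta_apply_inl (w : Wsp d_s m n) (η' : EuclideanSpace ℝ (Fin m))
    (p : Fin n × Fin d_s) :
    updEta w η' (Sum.inl p) = w (Sum.inl p) := rfl

@[simp]
theorem updEta_apply_inr (w : Wsp d_s m n) (η' : EuclideanSpace ℝ (Fin m)) (b : Fin m) :
    updEta w η' (Sum.inr b) = η' b := rfl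

def etaPart (w : Wsp d_s m n) : EuclideanSpace ℝ (Fin m) :=
  WithLp.toLp 2 (fun b => w (Sum.inr b))

def blockIncl (i : Fin n) : EuclideanSpace ℝ (Fin d_s) →L[ℝ] Wsp d_s m n :=
  LinearMap.toContinuousLinearMap
  { toFun := updBlk 0 i
    map_add' := fun x y => by ext (⟨j, a⟩ | b) <;> simp [ite_add_ite]
    map_smul' := fun c x => by ext (⟨j, a⟩ | b) <;> simp [mul_ite] }

def etaIncl : EuclideanSpace ℝ (Fin m) →L[ℝ] Wsp d_s m n :=
  LinearMap.toContinuousLinearMap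
  { toFun := updEta 0
    map_add' := fun x y => by ext (⟨j, a⟩ | b) <;> simp
    map_smul' := fun c x => by ext (⟨j, a⟩ | b) <;> simp }

theorem updBlk_eq_add (w : Wsp d_s m n) (i : Fin n) (θ' : EuclideanSpace ℝ (Fin d_s)) :
    updBlk w i θ' = updBlk w i 0 + blockIncl i θ' := by
  ext (⟨j, a⟩ | b)
  · rcases eq_or_ne j i with rfl | h <;> simp [blockIncl, *]
  · simp [blockIncl]

theorem updEta_eq_add (w : Wsp d_s m n) (η' : EuclideanSpace ℝ (Fin m)) :
    updEta w η' = updEta w 0 + etaIncl η' := by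
  ext (⟨j, a⟩ | b) <;> simp [etaIncl]

theorem hasFDerivAt_updBlk (w : Wsp d_s m n) (i : Fin n) (θ' : EuclideanSpace ℝ (Fin d_s)) :
    HasFDerivAt (updBlk w i) (blockIncl i) θ' := by
  rw [funext (updBlk_eq_add w i)]
  exact (blockIncl i).hasFDerivAt.const_add _

theorem hasFDerivAt_updEta (w : Wsp d_s m n) (η' : EuclideanSpace ℝ (Fin m)) :
    HasFDerivAt (updEta w) etaIncl η' := by
  rw [funext (updEta_eq_add w)]
  exact etaIncl.hasFDerivAt.const_add _

theorem blockIncl_single (i : Fin n) (a : Fin d_s) :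
    (blockIncl i (EuclideanSpace.single a 1) : Wsp d_s m n)
      = EuclideanSpace.single (Sum.inl (i, a)) 1 := by
  ext (⟨j, b⟩ | b) <;> simp [blockIncl, Prod.ext_iff, ite_and]

theorem etaIncl_single (b : Fin m) :
    (etaIncl (EuclideanSpace.single b 1) : Wsp d_s m n)
      = EuclideanSpace.single (Sum.inr b) 1 := by
  ext (⟨j, a⟩ | c) <;> simp [etaIncl]

theorem updBlk_blk (w : Wsp d_s m n) (i : Fin n) : updBlk w i (blk w i) = w := by
  ext (⟨j, a⟩ | b)
  · rcases eq_or_ne j i with rfl | h <;> simp [blk, *]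
  · rfl

theorem updEta_etaPart (w : Wsp d_s m n) : updEta w (etaPart w) = w := by
  ext (⟨j, a⟩ | b) <;> simp [etaPart]

theorem blk_updBlk (w : Wsp d_s m n) (i : Fin n) (θ' : EuclideanSpace ℝ (Fin d_s)) :
    blk (updBlk w i θ') = Function.update (blk w) i θ' := by
  ext j a
  rcases eq_or_ne j i with rfl | h <;> simp [blk, *]

theorem blk_updEta (w : Wsp d_s m n) (η' : EuclideanSpace ℝ (Fin m)) :
    blk (updEta w η') = blk w := rfl

theorem blk_diagPtEta (θ : EuclideanSpace ℝ (Fin d_s)) (η : EuclideanSpace ℝ (Fin m)) :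
    blk (diagPtEta θ η : Wsp d_s m n) = fun _ => θ := rfl

theorem etaPart_diagPtEta (θ : EuclideanSpace ℝ (Fin d_s)) (η : EuclideanSpace ℝ (Fin m)) :
    etaPart (diagPtEta θ η : Wsp d_s m n) = η := rfl

theorem differentiable_blk (i : Fin n) : Differentiable ℝ fun w : Wsp d_s m n => blk w i :=
  differentiable_euclidean.2 fun a =>
    (EuclideanSpace.proj (𝕜 := ℝ) (Sum.inl (i, a))).differentiable

theorem norm_sq_eq_sum_blk_add_etaPart (v : Wsp d_s m n) :
    ‖v‖ ^ 2 = ∑ i, ‖blk v i‖ ^ 2 + ‖etaPart v‖ ^ 2 := by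
  simp only [EuclideanSpace.norm_sq_eq, Fintype.sum_sum_type, Fintype.sum_prod_type]
  rfl

variable {g : Wsp d_s m n → ℝ} {w : Wsp d_s m n}

theorem blk_gradient (hg : DifferentiableAt ℝ g w) (i : Fin n) :
    blk (gradient g w) i = gradient (fun θ' => g (updBlk w i θ')) (blk w i) := by
  ext a
  rw [gradient_comp_apply_of_map_single (by rwa [updBlk_blk]) (hasFDerivAt_updBlk w i _)
    (blockIncl_single i a), updBlk_blk]
  rfl

theorem etaPart_gradient (hg : DifferentiableAt ℝ g w) :
    etaPart (gradient g w) = gradient (fun η' => g (updEta w η')) (etaPart w) := by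
  ext b
  rw [gradient_comp_apply_of_map_single (by rwa [updEta_etaPart]) (hasFDerivAt_updEta w _)
    (etaIncl_single b), updEta_etaPart]
  rfl

theorem norm_sq_gradient_eq_sum_partial (hg : DifferentiableAt ℝ g w) :
    ‖gradient g w‖ ^ 2 = ∑ i, ‖gradient (fun θ' => g (updBlk w i θ')) (blk w i)‖ ^ 2
      + ‖gradient (fun η' => g (updEta w η')) (etaPart w)‖ ^ 2 := by
  simp only [norm_sq_eq_sum_blk_add_etaPart, blk_gradient hg, etaPart_gradient hg]

end BlockCoordinates

section Average

variable {E F G : Type*} [NormedAddCommGroup E] [NormedSpace ℝ E] [NormedAddCommGroup F]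
  [NormedSpace ℝ F] [NormedAddCommGroup G] [NormedSpace ℝ G]

theorem HasFDerivAt.sum_update_const {ι : Type*} [Fintype ι] [DecidableEq ι]
    {g : E → F} {g' : E →L[ℝ] F} {x : E} (hg : HasFDerivAt g g' x) (i : ι) :
    HasFDerivAt (fun y => ∑ j, g (Function.update (fun _ => x) i y j)) g' x := by
  simp only [Function.apply_update (fun _ => g), Finset.sum_update_of_mem (Finset.mem_univ i)]
  exact hg.add_const _

theorem hasFDerivAt_comp_average_update_const {n : ℕ} {L : F → G} {f : E → F} {x : E}
    (hL : DifferentiableAt ℝ L (f x)) (hf : DifferentiableAt ℝ f x) (i : Fin n) :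
    HasFDerivAt (fun y => L ((1 / (n : ℝ)) • ∑ j, f (Function.update (fun _ => x) i y j)))
      ((1 / (n : ℝ)) • fderiv ℝ (L ∘ f) x) x := by
  have hn : (n : ℝ) ≠ 0 := Nat.cast_ne_zero.2 i.pos.ne'
  have hmean : (1 / (n : ℝ)) • ∑ j, f (Function.update (fun _ => x) i x j) = f x := by
    simp [← Nat.cast_smul_eq_nsmul ℝ, smul_smul, hn]
  have hL' : HasFDerivAt L (fderiv ℝ L (f x))
      ((1 / (n : ℝ)) • ∑ j, f (Function.update (fun _ => x) i x j)) :=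
    hmean ▸ hL.hasFDerivAt
  rw [fderiv_comp x hL hf, ← ContinuousLinearMap.comp_smul]
  exact hL'.comp x ((hf.hasFDerivAt.sum_update_const i).fun_const_smul _)

end Average

section FusionLoss

variable {d_s m n : ℕ} {F : Type*} [NormedAddCommGroup F] [NormedSpace ℝ F]
  {L : F → ℝ} {f : EuclideanSpace ℝ (Fin d_s) → F}

variable (L f) in
def fusionLoss (w : Wsp d_s m n) : ℝ :=
  L ((1 / (n : ℝ)) • ∑ i, f (blk w i))

theorem fusionLoss_updEta (w : Wsp d_s m n) (η' : EuclideanSpace ℝ (Fin m)) :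
    fusionLoss L f (updEta w η') = fusionLoss L f w := rfl

theorem differentiable_fusionLoss (hL : Differentiable ℝ L) (hf : Differentiable ℝ f) :
    Differentiable ℝ (fusionLoss L f : Wsp d_s m n → ℝ) :=
  hL.comp (.fun_const_smul (.fun_sum fun i _ => hf.comp (differentiable_blk i)) _)

theorem gradient_fusionLoss_updBlk_diagPtEta {θ : EuclideanSpace ℝ (Fin d_s)}
    (η : EuclideanSpace ℝ (Fin m)) (hL : DifferentiableAt ℝ L (f θ))
    (hf : DifferentiableAt ℝ f θ) (i : Fin n) :
    gradient (fun θ' => fusionLoss L f (updBlk (diagPtEta θ η) i θ')) θ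
      = (1 / (n : ℝ)) • gradient (L ∘ f) θ := by
  simp only [fusionLoss, blk_updBlk, blk_diagPtEta]
  rw [gradient, gradient, (hasFDerivAt_comp_average_update_const hL hf i).fderiv, map_smul]

end FusionLoss

theorem stmt_18_general (d_s m k n : ℕ)
    (L : EuclideanSpace ℝ (Fin k) → ℝ) (hL : Differentiable ℝ L)
    (f : EuclideanSpace ℝ (Fin d_s) → EuclideanSpace ℝ (Fin k))
    (hf : Differentiable ℝ f)
    (L_S : EuclideanSpace ℝ (Fin d_s) → ℝ) (hLS : L_S = L ∘ f)
    (L₁ : Wsp d_s m n → ℝ)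
    (hL₁ : L₁ = fun w => L ((1 / (n : ℝ)) • ∑ i : Fin n, f (blk w i)))
    (θ : EuclideanSpace ℝ (Fin d_s)) (η : EuclideanSpace ℝ (Fin m)) :
    (∀ i : Fin n,
        gradient (fun θ' => L₁ (updBlk (diagPtEta θ η) i θ')) θ
          = (1 / (n : ℝ)) • gradient L_S θ)
    ∧ gradient (fun η' => L₁ (updEta (diagPtEta θ η) η')) η = 0
    ∧ ‖gradient L₁ (diagPtEta θ η)‖ ^ 2 = (1 / (n : ℝ)) * ‖gradient L_S θ‖ ^ 2 := by
  subst hLS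
  obtain rfl : L₁ = fusionLoss L f := hL₁
  have hblock (i : Fin n) := gradient_fusionLoss_updBlk_diagPtEta η (hL (f θ)) (hf θ) i
  have heta : gradient (fun η' => fusionLoss L f (updEta (diagPtEta θ η : Wsp d_s m n) η')) η
      = 0 := by
    simp only [fusionLoss_updEta]
    exact gradient_const _ _
  refine ⟨hblock, heta, ?_⟩
  calc ‖gradient (fusionLoss L f) (diagPtEta θ η : Wsp d_s m n)‖ ^ 2
      = ∑ _i : Fin n, ‖(1 / (n : ℝ)) • gradient (L ∘ f) θ‖ ^ 2
          + ‖(0 : EuclideanSpace ℝ (Fin m))‖ ^ 2 := by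
        rw [norm_sq_gradient_eq_sum_partial (differentiable_fusionLoss hL hf _),
          etaPart_diagPtEta, heta]
        simp only [blk_diagPtEta, hblock]
    _ = n * (1 / (n : ℝ)) ^ 2 * ‖gradient (L ∘ f) θ‖ ^ 2 := by
        simp [norm_smul, mul_pow, mul_assoc]
    _ = 1 / (n : ℝ) * ‖gradient (L ∘ f) θ‖ ^ 2 := by
        rcases eq_or_ne (n : ℝ) 0 with hn | hn
        · simp [hn]
        · field_simp

/-- **Gradient computation at the fusion point.** With `L₁(θ₁,…,θₙ,η) = L((1/n)∑ᵢ f(θᵢ))`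
and `L_S = L ∘ f`, at every diagonal point `w₀ = (θ,…,θ,η)` the block partial gradients
of `L₁` equal `(1/n)∇L_S(θ)`, the `η` partial gradient of `L₁` is zero, and
`‖∇L₁(w₀)‖² = (1/n)‖∇L_S(θ)‖²`. -/
theorem stmt_18 (d_s m k n : ℕ) (hn : 1 ≤ n)
    (L : EuclideanSpace ℝ (Fin k) → ℝ) (hL : Differentiable ℝ L)
    (f : EuclideanSpace ℝ (Fin d_s) → EuclideanSpace ℝ (Fin k))
    (hf : Differentiable ℝ f)
    (L_S : EuclideanSpace ℝ (Fin d_s) → ℝ) (hLS : L_S = L ∘ f)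
    (L₁ : Wsp d_s m n → ℝ)
    (hL₁ : L₁ = fun w => L ((1 / (n : ℝ)) • ∑ i : Fin n, f (blk w i)))
    (θ : EuclideanSpace ℝ (Fin d_s)) (η : EuclideanSpace ℝ (Fin m)) :
    (∀ i : Fin n,
        gradient (fun θ' => L₁ (updBlk (diagPtEta θ η) i θ')) θ
          = (1 / (n : ℝ)) • gradient L_S θ)
    ∧ gradient (fun η' => L₁ (updEta (diagPtEta θ η) η')) η = 0
    ∧ ‖gradient L₁ (diagPtEta θ η)‖ ^ 2 = (1 / (n : ℝ)) * ‖gradient L_S θ‖ ^ 2 :=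
  stmt_18_general d_s m k n L hL f hf L_S hLS L₁ hL₁ θ η
end
end

section
/- Let r ∈ ℕ, networks f and f' with common input and output dimensions as in the deep fusion setting, let L : (Fin k → ℝ) → ℝ be any function on the output space, and define the big-model loss at parameters with all new (off-diagonal) blocks equal to zero as L_B(w₀) = L(DF(f,f')(x)) for a fixed input x. Then L_B(w₀) = L(((f x) + (f' x))/2); in particular, if L₁ denotes the loss of the average ensemble, L₁ = L((f(x)+f'(x))/2), then L₁(w₀) = L_B(w₀) at every parameter point w₀ whose off-diagonal fusion blocks η are zero. -/
/-- The forward pass of a fully connected network: `a₀ = x` and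
`a_{k+1} = φ_k(a_k w_k + b_k)` with the activation applied entrywise. -/
noncomputable def forward (dims : ℕ → ℕ)
    (w : ∀ k : ℕ, Matrix (Fin (dims k)) (Fin (dims (k + 1))) ℝ)
    (b : ∀ k : ℕ, Fin (dims (k + 1)) → ℝ)
    (φ : ℕ → ℝ → ℝ) (x : Fin (dims 0) → ℝ) : ∀ k : ℕ, Fin (dims k) → ℝ
  | 0 => x
  | k + 1 => fun c => φ k ((Matrix.vecMul (forward dims w b φ x k) (w k) + b k) c)

/-- The forward pass of the deep fusion of two networks with all new (off-diagonal)
fusion blocks equal to zero (block-diagonal weights, concatenated biases,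
concatenated input). -/
noncomputable def fusedForward (dims dims' : ℕ → ℕ)
    (w : ∀ k : ℕ, Matrix (Fin (dims k)) (Fin (dims (k + 1))) ℝ)
    (w' : ∀ k : ℕ, Matrix (Fin (dims' k)) (Fin (dims' (k + 1))) ℝ)
    (b : ∀ k : ℕ, Fin (dims (k + 1)) → ℝ)
    (b' : ∀ k : ℕ, Fin (dims' (k + 1)) → ℝ)
    (φ : ℕ → ℝ → ℝ) (x : Fin (dims 0) → ℝ) (x' : Fin (dims' 0) → ℝ) :
    ∀ k : ℕ, (Fin (dims k) ⊕ Fin (dims' k)) → ℝ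
  | 0 => Sum.elim x x'
  | k + 1 => fun c => φ k
      ((Matrix.vecMul (fusedForward dims dims' w w' b b' φ x x' k)
          (Matrix.fromBlocks (w k) 0 0 (w' k)) + Sum.elim (b k) (b' k)) c)

lemma fused_eq (dims dims' : ℕ → ℕ)
    (w : ∀ k : ℕ, Matrix (Fin (dims k)) (Fin (dims (k + 1))) ℝ)
    (w' : ∀ k : ℕ, Matrix (Fin (dims' k)) (Fin (dims' (k + 1))) ℝ)
    (b : ∀ k : ℕ, Fin (dims (k + 1)) → ℝ)
    (b' : ∀ k : ℕ, Fin (dims' (k + 1)) → ℝ)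
    (φ : ℕ → ℝ → ℝ) (x : Fin (dims 0) → ℝ) (x' : Fin (dims' 0) → ℝ) (k : ℕ) :
    fusedForward dims dims' w w' b b' φ x x' k
      = Sum.elim (forward dims w b φ x k) (forward dims' w' b' φ x' k) := by
  induction k with
  | zero => rfl
  | succ k ih =>
    funext c
    cases c with
    | inl c =>
      show φ k _ = φ k _
      congr 1
      simp only [Pi.add_apply, Sum.elim_inl, ih, Matrix.vecMul, dotProduct,
        Fintype.sum_sum_type]
      simp [Matrix.fromBlocks]
    | inr c =>
      show φ k _ = φ k _
      congr 1
      simp only [Pi.add_apply, Sum.elim_inr, ih, Matrix.vecMul, dotProduct,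
        Fintype.sum_sum_type]
      simp [Matrix.fromBlocks]


/-- **Pre-fusion and post-fusion losses agree at `η = 0`.** For any loss `L` on the
output space and networks `f`, `f'` with common input and output dimensions, the
big-model loss at the fusion point (all new off-diagonal blocks zero),
`L_B(w₀) = L(DF(f,f')(x))`, equals the loss of the average ensemble
`L((f(x) + f'(x))/2)`. -/
theorem stmt_19 (r : ℕ) (dims dims' : ℕ → ℕ)
    (h0 : dims' 0 = dims 0) (hr : dims' r = dims r)
    (w : ∀ k : ℕ, Matrix (Fin (dims k)) (Fin (dims (k + 1))) ℝ)
    (w' : ∀ k : ℕ, Matrix (Fin (dims' k)) (Fin (dims' (k + 1))) ℝ)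
    (b : ∀ k : ℕ, Fin (dims (k + 1)) → ℝ)
    (b' : ∀ k : ℕ, Fin (dims' (k + 1)) → ℝ)
    (φ : ℕ → ℝ → ℝ) (x : Fin (dims 0) → ℝ)
    (L : (Fin (dims r) → ℝ) → ℝ) :
    L (fun c =>
        (fusedForward dims dims' w w' b b' φ x (fun c' => x (Fin.cast h0 c')) r (Sum.inl c)
          + fusedForward dims dims' w w' b b' φ x (fun c' => x (Fin.cast h0 c')) r
              (Sum.inr (Fin.cast hr.symm c))) / 2)
      = L (fun c =>
          (forward dims w b φ x r c
            + forward dims' w' b' φ (fun c' => x (Fin.cast h0 c')) r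
                (Fin.cast hr.symm c)) / 2) := by
  rw [fused_eq]
  rfl
end
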